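/- arXiv:solv-int/9710009 — 2 statements merged into one kernel-verified Lean document; each statement's English description precedes it below -/
import Mathlib

section
/- For nonnegative integers k and i with i ≤ k, the generalized binomial coefficient C(k - 1/2, i) = Γ(k+1/2)/(i!·Γ(k-i+1/2)) equals (1/2^{2i})·C(2k,2i)·C(2i,i)·C(k,i)^{-1}. -/
/-! Both Gamma values are half-integer values, `Γ(n + 1/2) = (2n)! / (4ⁿ n!) · √π`, so `√π` cancels
and the claim becomes a factorial identity: `(2k)! = C(2k, 2i) C(2i, i) i! i! (2k - 2i)!` and
`k! = C(k, i) i! (k - i)!`. -/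

open Nat Real

theorem Nat.factorial_two_mul_eq_mul_doubleFactorial (n : ℕ) :
    (2 * n)! = 2 ^ n * n ! * (2 * n - 1)‼ := by
  cases n with
  | zero => rfl
  | succ n =>
    rw [show 2 * (n + 1) = 2 * n + 1 + 1 by ring, factorial_eq_mul_doubleFactorial,
      show 2 * n + 1 + 1 = 2 * (n + 1) by ring, doubleFactorial_two_mul]
    rfl

theorem Real.Gamma_nat_add_half_eq_factorial (n : ℕ) :
    Gamma (n + 1 / 2) = (2 * n)! / (4 ^ n * n !) * √π := by
  rw [Gamma_nat_add_half, factorial_two_mul_eq_mul_doubleFactorial,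
    show (4 : ℝ) ^ n = 2 ^ n * 2 ^ n by rw [← mul_pow]; norm_num]
  push_cast
  field_simp

theorem Nat.factorial_two_mul_eq_choose_mul_centralBinom {k i : ℕ} (h : i ≤ k) :
    (2 * k)! = (2 * k).choose (2 * i) * (2 * i).choose i * i ! * i ! * (2 * (k - i))! := by
  rw [← choose_mul_factorial_mul_factorial (show 2 * i ≤ 2 * k by omega),
    ← choose_mul_factorial_mul_factorial (show i ≤ 2 * i by omega),
    show 2 * i - i = i by omega, show 2 * k - 2 * i = 2 * (k - i) by omega]
  ring

/-- For natural numbers `i ≤ k`, the generalized binomial coefficient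
`C(k - 1/2, i) = Γ(k+1/2)/(i!·Γ(k-i+1/2))` equals
`(1/2^(2i))·C(2k,2i)·C(2i,i)·C(k,i)⁻¹`. -/
theorem stmt0 (k i : ℕ) (h : i ≤ k) :
    Real.Gamma ((k : ℝ) + 1/2) / ((Nat.factorial i : ℝ) * Real.Gamma ((k : ℝ) - (i : ℝ) + 1/2))
      = (1 / 2 ^ (2 * i)) * (Nat.choose (2 * k) (2 * i) : ℝ) * (Nat.choose (2 * i) i : ℝ)
        * ((Nat.choose k i : ℝ))⁻¹ := by
  have hdiff : (k : ℝ) - i = (k - i : ℕ) := by rw [Nat.cast_sub h]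
  have hfac : ((2 * k)! : ℝ) = _ :=
    congrArg Nat.cast (factorial_two_mul_eq_choose_mul_centralBinom h)
  have hk : (k ! : ℝ) = _ := congrArg Nat.cast (choose_mul_factorial_mul_factorial h).symm
  have hpow : (4 : ℝ) ^ k = 2 ^ (2 * i) * 4 ^ (k - i) := by
    rw [pow_mul, show (2 : ℝ) ^ 2 = 4 by norm_num, ← pow_add, Nat.add_sub_cancel' h]
  have hchoose : (0 : ℝ) < k.choose i := by exact_mod_cast choose_pos h
  rw [hdiff, Gamma_nat_add_half_eq_factorial, Gamma_nat_add_half_eq_factorial, hfac, hk, hpow]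
  push_cast
  field_simp
end

section
/- The heat kernel coefficients a_k(x,x') for L = ∂²/∂x² + u, defined recursively by a_0 = 1 and (1 + D/k)a_k = L a_{k-1} where D = (x-x')∂/∂x, have Taylor coefficients <n|a_k> given as the finite sum <n|a_k> = Σ_{n_1,...,n_{k-1} ≥ 0} (1+n_k/k)^{-1}···(1+n_1/1)^{-1}·<n_k|L|n_{k-1}>···<n_1|L|0> with n_k := n. -/
open scoped ContDiff
private lemma itd_add {f g : ℝ → ℝ} (hf : ContDiff ℝ ∞ f) (hg : ContDiff ℝ ∞ g) (n : ℕ) :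
    iteratedDeriv n (fun x => f x + g x) = fun x => iteratedDeriv n f x + iteratedDeriv n g x := by
  induction n generalizing f g with
  | zero => simp [iteratedDeriv_zero]
  | succ n ih =>
    have hd : deriv (fun x => f x + g x) = fun x => deriv f x + deriv g x :=
      funext fun x => deriv_add (hf.differentiable (by simp) x) (hg.differentiable (by simp) x)
    simp only [iteratedDeriv_succ', hd,
      ih (contDiff_infty_iff_deriv.mp hf).2 (contDiff_infty_iff_deriv.mp hg).2]

private lemma itd_smul {f : ℝ → ℝ} (hf : ContDiff ℝ ∞ f) (c : ℝ) (n : ℕ) :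
    iteratedDeriv n (fun x => c * f x) = fun x => c * iteratedDeriv n f x := by
  induction n generalizing f with
  | zero => simp [iteratedDeriv_zero]
  | succ n ih =>
    have hd : deriv (fun x => c * f x) = fun x => c * deriv f x :=
      funext fun x => deriv_const_mul c (hf.differentiable (by simp) x)
    simp only [iteratedDeriv_succ', hd, ih (contDiff_infty_iff_deriv.mp hf).2]

private lemma itd_leibniz {f g : ℝ → ℝ} (hf : ContDiff ℝ ∞ f) (hg : ContDiff ℝ ∞ g) (n : ℕ)
    (x : ℝ) :
    iteratedDeriv n (fun y => f y * g y) x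
      = ∑ i ∈ Finset.range (n + 1),
          (n.choose i : ℝ) * iteratedDeriv i f x * iteratedDeriv (n - i) g x := by
  induction n generalizing f g with
  | zero => simp [iteratedDeriv_zero]
  | succ n ih =>
    have hf' := (contDiff_infty_iff_deriv.mp hf).2
    have hg' := (contDiff_infty_iff_deriv.mp hg).2
    have hd : deriv (fun y => f y * g y) = fun y => deriv f y * g y + f y * deriv g y :=
      funext fun y => deriv_mul (hf.differentiable (by simp) y) (hg.differentiable (by simp) y)
    rw [iteratedDeriv_succ', hd, itd_add (hf'.mul hg) (hf.mul hg')]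
    simp only [ih hf' hg, ih hf hg']
    -- now combine
    have key : (∑ i ∈ Finset.range (n + 1),
          (n.choose i : ℝ) * iteratedDeriv i f x * iteratedDeriv (n - i + 1) g x)
        = (∑ i ∈ Finset.range (n + 1),
            (n.choose (i+1) : ℝ) * iteratedDeriv (i+1) f x * iteratedDeriv (n - i) g x)
          + iteratedDeriv 0 f x * iteratedDeriv (n + 1) g x := by
      rw [Finset.sum_range_succ' (fun i => (n.choose i : ℝ) * iteratedDeriv i f x * iteratedDeriv (n - i + 1) g x) n]
      rw [Finset.sum_range_succ (fun i => (n.choose (i+1) : ℝ) * iteratedDeriv (i+1) f x * iteratedDeriv (n - i) g x) n]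
      simp [Nat.choose_succ_self]
      apply Finset.sum_congr rfl
      intro i hi
      rw [Finset.mem_range] at hi
      congr 2
      omega
    have e1 : ∀ i, iteratedDeriv i (deriv f) x = iteratedDeriv (i+1) f x := fun i => by
      rw [← iteratedDeriv_succ']
    have e2 : ∀ i, iteratedDeriv i (deriv g) x = iteratedDeriv (i+1) g x := fun i => by
      rw [← iteratedDeriv_succ']
    simp only [e1, e2] at key ⊢
    rw [key]
    rw [Finset.sum_range_succ' (fun i => (((n+1).choose i : ℝ)) * iteratedDeriv i f x * iteratedDeriv (n+1-i) g x) (n+1)]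
    have hcon : ∀ i ∈ Finset.range (n+1),
        (((n+1).choose (i+1) : ℝ)) * iteratedDeriv (i+1) f x * iteratedDeriv (n+1-(i+1)) g x
          = (n.choose i : ℝ) * iteratedDeriv (i+1) f x * iteratedDeriv (n-i) g x
            + (n.choose (i+1) : ℝ) * iteratedDeriv (i+1) f x * iteratedDeriv (n-i) g x := by
      intro i hi
      have h2 : n + 1 - (i+1) = n - i := by omega
      rw [h2, Nat.choose_succ_succ]
      push_cast
      ring
    rw [Finset.sum_congr rfl hcon, Finset.sum_add_distrib]
    simp [iteratedDeriv_zero]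
    ring

private lemma itd_const_one (n : ℕ) (x : ℝ) :
    iteratedDeriv n (fun _ : ℝ => (1:ℝ)) x = if n = 0 then 1 else 0 := by
  induction n generalizing x with
  | zero => simp [iteratedDeriv_zero]
  | succ n ih =>
    rw [iteratedDeriv_succ]
    simp only [Nat.succ_ne_zero, if_false]
    have : iteratedDeriv n (fun _ : ℝ => (1:ℝ)) = fun y => if n = 0 then 1 else 0 :=
      funext fun y => ih y
    rw [this]
    split <;> simp

private lemma itd_sub_const (c : ℝ) (n : ℕ) (x : ℝ) :
    iteratedDeriv n (fun y : ℝ => y - c) x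
      = if n = 0 then x - c else if n = 1 then 1 else 0 := by
  match n with
  | 0 => simp [iteratedDeriv_zero]
  | (n+1) =>
    rw [iteratedDeriv_succ']
    have hd : deriv (fun y : ℝ => y - c) = fun _ => (1:ℝ) := by
      funext y; simp
    rw [hd, itd_const_one]
    rcases Nat.eq_zero_or_pos n with h | h <;> simp [h] <;> omega

private lemma itd_linmul {f : ℝ → ℝ} (hf : ContDiff ℝ ∞ f) (c : ℝ) (n : ℕ) :
    iteratedDeriv n (fun x => (x - c) * deriv f x) c = (n : ℝ) * iteratedDeriv n f c := by
  have hsub : ContDiff ℝ ∞ (fun y : ℝ => y - c) := contDiff_id.sub contDiff_const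
  have hf' := (contDiff_infty_iff_deriv.mp hf).2
  rw [itd_leibniz hsub hf' n c]
  match n with
  | 0 => simp [iteratedDeriv_zero]
  | (n+1) =>
    rw [Finset.sum_eq_single 1]
    · rw [itd_sub_const]
      have : n + 1 - 1 = n := rfl
      simp only [this, if_neg one_ne_zero, if_pos rfl, Nat.choose_one_right, mul_one]
      rw [← iteratedDeriv_succ']
      simp
    · intro i hi h1
      rw [itd_sub_const]
      rcases Nat.eq_zero_or_pos i with h | h
      · simp [h]
      · have : ¬ i = 0 := by omega
        simp [this, h1]
    · intro h
      exact absurd (Finset.mem_range.mpr (by omega)) h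


/-- The Taylor coefficients `<n|a_k>` of the heat kernel coefficients of
`L = ∂²/∂x² + u`, defined by `a₀ = 1` and `(1 + D/k)a_k = L a_{k-1}` with
`D = (x - x')∂/∂x`, are given by the (effectively finite) multiple sum
`<n|a_k> = Σ_{n₁,…,n_{k-1}≥0} (1+n_k/k)⁻¹⋯(1+n₁/1)⁻¹ <n_k|L|n_{k-1}>⋯<n₁|L|0>`
(with `n_k = n`).  Here the multiple sum is encoded by the iterated matrix
product `T`: `T 0 = id`, `T (j+1) m l = Σ'_p (1 + m/(j+1))⁻¹ <m|L|p> (T j) p l`,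
and the claim is `<n|a_k> = T k n 0`. -/
theorem stmt7 (x' : ℝ) (u : ℝ → ℝ) (hu : ContDiff ℝ (⊤ : ℕ∞) u)
    (a : ℕ → ℝ → ℝ) (ha : ∀ k, ContDiff ℝ (⊤ : ℕ∞) (a k))
    (ha0 : a 0 = fun _ => 1)
    (harec : ∀ k : ℕ, 1 ≤ k → ∀ x : ℝ,
      a k x + (1 / (k : ℝ)) * (x - x') * deriv (a k) x
        = deriv (deriv (a (k - 1))) x + u x * a (k - 1) x)
    (ME : ℕ → ℕ → ℝ)
    (hME : ∀ m n : ℕ, ME m n =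
      if n ≤ m then (Nat.choose m n : ℝ) * iteratedDeriv (m - n) u x'
      else if n = m + 2 then 1 else 0)
    (T : ℕ → ℕ → ℕ → ℝ)
    (hT0 : ∀ m l : ℕ, T 0 m l = if m = l then 1 else 0)
    (hTsucc : ∀ j m l : ℕ,
      T (j + 1) m l = ∑' p : ℕ, (1 + (m : ℝ) / ((j : ℝ) + 1))⁻¹ * ME m p * T j p l) :
    ∀ k : ℕ, 1 ≤ k → ∀ n : ℕ, iteratedDeriv n (a k) x' = T k n 0 := by
  have hu' : ContDiff ℝ ∞ u := hu.of_le (by simp)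
  have ha' : ∀ k, ContDiff ℝ ∞ (a k) := fun k => (ha k).of_le (by simp)
  have key : ∀ k n, iteratedDeriv n (a k) x' = T k n 0 := by
    intro k
    induction k with
    | zero =>
      intro n
      rw [ha0, hT0, itd_const_one]
    | succ k ih =>
      intro n
      have hak := ha' k
      have haK := ha' (k + 1)
      have hdaK := (contDiff_infty_iff_deriv.mp haK).2
      have hdak := (contDiff_infty_iff_deriv.mp hak).2
      have hddak := (contDiff_infty_iff_deriv.mp hdak).2
      have hKpos : (0:ℝ) < (k:ℝ) + 1 := by positivity
      have hfun : (fun x => a (k+1) x + (1/((k:ℝ)+1)) * ((x - x') * deriv (a (k+1)) x))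
          = fun x => deriv (deriv (a k)) x + u x * a k x := by
        funext x
        have h := harec (k+1) (by omega) x
        simp only [Nat.add_sub_cancel] at h
        push_cast at h
        rw [← h]
        ring
      have hmulsm : ContDiff ℝ ∞ (fun x => (x - x') * deriv (a (k+1)) x) :=
        (contDiff_id.sub contDiff_const).mul hdaK
      have L1 : iteratedDeriv n
            (fun x => a (k+1) x + (1/((k:ℝ)+1)) * ((x - x') * deriv (a (k+1)) x)) x'
          = iteratedDeriv n (a (k+1)) x'
            + (1/((k:ℝ)+1)) * ((n:ℝ) * iteratedDeriv n (a (k+1)) x') := by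
        have h1 := congrFun (itd_add (g := fun x => (1/((k:ℝ)+1)) * ((x - x') * deriv (a (k+1)) x)) haK (contDiff_const.mul hmulsm) n) x'
        have h2 := congrFun (itd_smul hmulsm (1/((k:ℝ)+1)) n) x'
        have h3 := itd_linmul haK x' n
        simp only [h1, h2, h3]
      have R1 : iteratedDeriv n (fun x => deriv (deriv (a k)) x + u x * a k x) x'
          = iteratedDeriv (n+2) (a k) x'
            + ∑ i ∈ Finset.range (n+1),
                (n.choose i : ℝ) * iteratedDeriv i u x' * iteratedDeriv (n-i) (a k) x' := by
        have h1 := congrFun (itd_add hddak (hu'.mul hak) n) x'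
        have h2 := itd_leibniz hu' hak n x'
        have h3 : iteratedDeriv n (deriv (deriv (a k))) x' = iteratedDeriv (n+2) (a k) x' := by
          rw [show n+2 = n+1+1 from rfl, iteratedDeriv_succ', iteratedDeriv_succ']
        simp only [h1, h2, h3]
      have heq : iteratedDeriv n (a (k+1)) x'
            + (1/((k:ℝ)+1)) * ((n:ℝ) * iteratedDeriv n (a (k+1)) x')
          = T k (n+2) 0 + ∑ i ∈ Finset.range (n+1),
              (n.choose i : ℝ) * iteratedDeriv i u x' * T k (n-i) 0 := by
        rw [← L1, hfun, R1, ih (n+2)]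
        congr 1
        exact Finset.sum_congr rfl fun i _ => by rw [ih (n-i)]
      have hrefl : ∑ i ∈ Finset.range (n+1),
              (n.choose i : ℝ) * iteratedDeriv i u x' * T k (n-i) 0
          = ∑ p ∈ Finset.range (n+1),
              (n.choose p : ℝ) * iteratedDeriv (n-p) u x' * T k p 0 := by
        rw [← Finset.sum_range_reflect
          (fun p => (n.choose p : ℝ) * iteratedDeriv (n-p) u x' * T k p 0) (n+1)]
        apply Finset.sum_congr rfl
        intro i hi
        rw [Finset.mem_range] at hi
        have h1 : n + 1 - 1 - i = n - i := by omega
        have h2 : n - (n - i) = i := by omega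
        rw [h1, Nat.choose_symm (by omega), h2]
      have hME2 : ME n (n+2) = 1 := by
        rw [hME, if_neg (by omega), if_pos rfl]
      have htsum : T (k+1) n 0
          = (1 + (n:ℝ)/((k:ℝ)+1))⁻¹ * T k (n+2) 0
            + ∑ p ∈ Finset.range (n+1),
                (1 + (n:ℝ)/((k:ℝ)+1))⁻¹
                  * ((n.choose p : ℝ) * iteratedDeriv (n-p) u x') * T k p 0 := by
        rw [hTsucc k n 0]
        have hs : ∑' p : ℕ, (1 + (n:ℝ)/((k:ℝ)+1))⁻¹ * ME n p * T k p 0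
            = ∑ p ∈ insert (n+2) (Finset.range (n+1)),
                (1 + (n:ℝ)/((k:ℝ)+1))⁻¹ * ME n p * T k p 0 := by
          apply tsum_eq_sum
          intro p hp
          simp only [Finset.mem_insert, Finset.mem_range, not_or, not_lt] at hp
          rw [hME, if_neg (by omega), if_neg (by omega)]
          ring
        rw [hs, Finset.sum_insert (by simp), hME2, mul_one]
        congr 1
        apply Finset.sum_congr rfl
        intro p hp
        rw [Finset.mem_range] at hp
        rw [hME, if_pos (by omega)]
      have hcne : (1 + (n:ℝ)/((k:ℝ)+1)) ≠ 0 := by positivity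
      have hA : iteratedDeriv n (a (k+1)) x'
          = (1 + (n:ℝ)/((k:ℝ)+1))⁻¹ * (T k (n+2) 0 + ∑ p ∈ Finset.range (n+1),
              (n.choose p : ℝ) * iteratedDeriv (n-p) u x' * T k p 0) := by
        rw [eq_inv_mul_iff_mul_eq₀ hcne, ← hrefl, ← heq]
        ring
      rw [hA, htsum, mul_add, Finset.mul_sum]
      congr 1
      exact Finset.sum_congr rfl fun p _ => by ring
  intro k _ n
  exact key k n
end
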